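/- For any pavable partition λ with 2-quotient (μ,ν), the number of dominoes in any domino paving of λ equals |μ| + |ν| = |λ|/2. -/

import Mathlib

open Finset

/-- Cells of the Young diagram of a partition given by its list of row lengths (0-indexed):
`(i, j)` with `i` the row and `j` the column. -/
def cellsOf (l : List ℕ) : Finset (ℕ × ℕ) :=
  (Finset.range l.length).biUnion fun i =>
    (Finset.range (l.getD i 0)).image fun j => (i, j)

/-- `l` is a partition: a nonincreasing list of positive integers. -/
def IsPartition (l : List ℕ) : Prop :=
  l.Pairwise (· ≥ ·) ∧ ∀ a ∈ l, 0 < a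

/-- A domino, given by its top-left cell and its orientation (`true` = horizontal). -/
abbrev Domino : Type := (ℕ × ℕ) × Bool

/-- The two cells occupied by a domino. -/
def dcells : Domino → Finset (ℕ × ℕ)
  | ((i, j), true) => {(i, j), (i, j + 1)}
  | ((i, j), false) => {(i, j), (i + 1, j)}

/-- A domino paving of a finite set of cells: a family of pairwise disjoint dominoes
whose cells are exactly the given cells. -/
structure Paving (C : Finset (ℕ × ℕ)) where
  dominoes : Finset Domino
  disj : (dominoes : Set Domino).PairwiseDisjoint dcells
  cover : dominoes.biUnion dcells = C

/-- A set of cells is pavable when it can be written as a disjoint union of dominoes. -/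
def Pavable (C : Finset (ℕ × ℕ)) : Prop := Nonempty (Paving C)

/-- The beta-numbers `l_i = λ_i + k - i` (1-indexed) of a partition. -/
def betaList (l : List ℕ) : List ℕ :=
  l.mapIdx fun i a => a + (l.length - 1 - i)

/-- Entries of parity `r` of `L`, minus the staircase values `r, r+2, r+4, …` assigned
from right to left, halved, with zero parts removed. -/
def quotPart (L : List ℕ) (r : ℕ) : List ℕ :=
  let E := L.filter fun x => x % 2 == r
  (E.mapIdx fun i a => (a - (2 * (E.length - 1 - i) + r)) / 2).filter fun x => x != 0

/-- The 2-quotient of a partition. -/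
def twoQuotient (l : List ℕ) : List ℕ × List ℕ :=
  (quotPart (betaList l) 0, quotPart (betaList l) 1)
/-- A semistandard Young tableau on the cell set `C`: positive entries on `C`,
weakly increasing along rows, strictly increasing down columns, zero off `C`. -/
structure SSYT (C : Finset (ℕ × ℕ)) where
  entry : ℕ → ℕ → ℕ
  pos : ∀ i j, (i, j) ∈ C → 0 < entry i j
  zeros : ∀ i j, (i, j) ∉ C → entry i j = 0
  row_weak : ∀ i j, (i, j) ∈ C → (i, j + 1) ∈ C → entry i j ≤ entry i (j + 1)
  col_strict : ∀ i j, (i, j) ∈ C → (i + 1, j) ∈ C → entry i j < entry (i + 1) j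

/-- The multiset of entries of a semistandard Young tableau. -/
def SSYT.ms {C : Finset (ℕ × ℕ)} (T : SSYT C) : Multiset ℕ :=
  C.val.map fun c => T.entry c.1 c.2

/-- The weight (exponent vector) of a multiset of entries. -/
noncomputable def wtOf (m : Multiset ℕ) : ℕ →₀ ℕ := m.toFinsupp

/-- A domino tableau on the cell set `C`: a domino paving together with a positive
entry in each domino, weakly increasing along rows and strictly increasing down
columns (between distinct dominoes). -/
structure DominoTableau (C : Finset (ℕ × ℕ)) extends Paving C where
  entry : Domino → ℕ
  pos : ∀ d ∈ dominoes, 0 < entry d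
  zeros : ∀ d, d ∉ dominoes → entry d = 0
  row_weak : ∀ d₁ ∈ dominoes, ∀ d₂ ∈ dominoes, ∀ i j,
    (i, j) ∈ dcells d₁ → (i, j + 1) ∈ dcells d₂ → entry d₁ ≤ entry d₂
  col_strict : ∀ d₁ ∈ dominoes, ∀ d₂ ∈ dominoes, d₁ ≠ d₂ → ∀ i j,
    (i, j) ∈ dcells d₁ → (i + 1, j) ∈ dcells d₂ → entry d₁ < entry d₂

/-- The multiset of entries of a domino tableau (one entry per domino). -/
def DominoTableau.ms {C : Finset (ℕ × ℕ)} (T : DominoTableau C) : Multiset ℕ :=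
  T.dominoes.val.map T.entry

/-- The Schur function of the shape with cell set `C`, as a multivariate power series:
the coefficient of a monomial is the number of semistandard Young tableaux of that weight. -/
noncomputable def schurGF (C : Finset (ℕ × ℕ)) : MvPowerSeries ℕ ℤ :=
  fun m => (Nat.card {T : SSYT C // wtOf T.ms = m} : ℤ)

/-- The generating function of domino tableaux on the cell set `C`. -/
noncomputable def dominoGF (C : Finset (ℕ × ℕ)) : MvPowerSeries ℕ ℤ :=
  fun m => (Nat.card {T : DominoTableau C // wtOf T.ms = m} : ℤ)
/-- A semistandard set-valued Young tableau on the cell set `C`. -/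
structure SetSSYT (C : Finset (ℕ × ℕ)) where
  entry : ℕ → ℕ → Finset ℕ
  nonemp : ∀ i j, (i, j) ∈ C → (entry i j).Nonempty
  pos : ∀ i j, ∀ a ∈ entry i j, 0 < a
  empt : ∀ i j, (i, j) ∉ C → entry i j = ∅
  row_weak : ∀ i j, (i, j) ∈ C → (i, j + 1) ∈ C →
    ∀ a ∈ entry i j, ∀ b ∈ entry i (j + 1), a ≤ b
  col_strict : ∀ i j, (i, j) ∈ C → (i + 1, j) ∈ C →
    ∀ a ∈ entry i j, ∀ b ∈ entry (i + 1) j, a < b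

/-- The multiset of all entries of a set-valued tableau. -/
def SetSSYT.ms {C : Finset (ℕ × ℕ)} (T : SetSSYT C) : Multiset ℕ :=
  C.val.bind fun c => (T.entry c.1 c.2).val

/-- A domino is of type 1 when the small triangle cut off by the even diagonal
crossing it points upward; equivalently its cell of even content is the right cell
(horizontal case) resp. the top cell (vertical case). -/
def dtype1 : Domino → Bool
  | ((i, j), true) => (i + j) % 2 == 1
  | ((i, j), false) => (i + j) % 2 == 0

/-- The (even) diagonal on which a domino lies: the content `j - i` of its unique
cell of even content. -/
def ddiag : Domino → ℤ
  | ((i, j), h) =>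
    if (i + j) % 2 = 0 then (j : ℤ) - i
    else if h then (j : ℤ) - i + 1 else (j : ℤ) - i - 1

/-- `d₂` is weakly southeast of `d₁`: some cell of `d₂` is weakly southeast of the
top-left cell of `d₁`. -/
def weaklySE (d₁ d₂ : Domino) : Prop :=
  ∃ c ∈ dcells d₂, d₁.1.1 ≤ c.1 ∧ d₁.1.2 ≤ c.2

/-- A set-valued domino tableau on the cell set `C`. -/
structure SVDT (C : Finset (ℕ × ℕ)) extends Paving C where
  entry : Domino → Finset ℕ
  nonemp : ∀ d, d ∈ dominoes → (entry d).Nonempty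
  pos : ∀ d, ∀ a ∈ entry d, 0 < a
  empt : ∀ d, d ∉ dominoes → entry d = ∅
  /-- Restricting to the minimum entry of each domino gives a domino tableau: rows. -/
  min_row : ∀ d₁ (h₁ : d₁ ∈ dominoes), ∀ d₂ (h₂ : d₂ ∈ dominoes), ∀ i j,
    (i, j) ∈ dcells d₁ → (i, j + 1) ∈ dcells d₂ →
    (entry d₁).min' (nonemp d₁ h₁) ≤ (entry d₂).min' (nonemp d₂ h₂)
  /-- Restricting to the minimum entry of each domino gives a domino tableau: columns. -/
  min_col : ∀ d₁ (h₁ : d₁ ∈ dominoes), ∀ d₂ (h₂ : d₂ ∈ dominoes), d₁ ≠ d₂ → ∀ i j,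
    (i, j) ∈ dcells d₁ → (i + 1, j) ∈ dcells d₂ →
    (entry d₁).min' (nonemp d₁ h₁) < (entry d₂).min' (nonemp d₂ h₂)
  /-- Same-type dominoes on neighboring diagonals, `F₂` weakly southeast of `F₁`,
  `F₁` on `D_{2k}` and `F₂` on `D_{2(k+1)}`: `max F₁ ≤ min F₂`. -/
  diag_le : ∀ d₁ ∈ dominoes, ∀ d₂ ∈ dominoes, dtype1 d₁ = dtype1 d₂ →
    ddiag d₂ = ddiag d₁ + 2 → weaklySE d₁ d₂ →
    ∀ a ∈ entry d₁, ∀ b ∈ entry d₂, a ≤ b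
  /-- Same-type dominoes on neighboring diagonals, `F₂` weakly southeast of `F₁`,
  `F₁` on `D_{2(k+1)}` and `F₂` on `D_{2k}`: `max F₁ < min F₂`. -/
  diag_lt : ∀ d₁ ∈ dominoes, ∀ d₂ ∈ dominoes, dtype1 d₁ = dtype1 d₂ →
    ddiag d₁ = ddiag d₂ + 2 → weaklySE d₁ d₂ →
    ∀ a ∈ entry d₁, ∀ b ∈ entry d₂, a < b

/-- The multiset of all entries of a set-valued domino tableau. -/
def SVDT.ms {C : Finset (ℕ × ℕ)} (T : SVDT C) : Multiset ℕ :=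
  T.dominoes.val.bind fun d => (T.entry d).val

/-- The stable Grothendieck polynomial of the shape with cell set `C`. -/
noncomputable def setSchurGF (C : Finset (ℕ × ℕ)) : MvPowerSeries ℕ ℤ :=
  fun m => (-1) ^ ((m.sum fun _ n => n) - C.card) *
    (Nat.card {T : SetSSYT C // wtOf T.ms = m} : ℤ)

/-- The signed generating function of set-valued domino tableaux on `C`. -/
noncomputable def svdtGF (C : Finset (ℕ × ℕ)) : MvPowerSeries ℕ ℤ :=
  fun m => (-1) ^ ((m.sum fun _ n => n) - C.card / 2) *
    (Nat.card {T : SVDT C // wtOf T.ms = m} : ℤ)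
/-!  Shifted objects.  Primed/unprimed letters `1' < 1 < 2' < 2 < …` are encoded by
positive natural numbers: an odd value `2i - 1` encodes the primed letter `i'` and an
even value `2i` encodes the unprimed letter `i`.  The usual order on `ℕ` then realizes
the order on the alphabet, `varOf` returns the underlying index `i`, and a letter is
primed iff its code is odd. -/

/-- The index `i` of the (primed or unprimed) letter encoded by `v`. -/
def varOf (v : ℕ) : ℕ := (v + 1) / 2

/-- The cells of `C` lying weakly northeast of the main diagonal `D₀`. -/
def upCells (C : Finset (ℕ × ℕ)) : Finset (ℕ × ℕ) := C.filter fun c => c.1 ≤ c.2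

/-- The defining condition `λ_k ≥ k` on shifted shapes. -/
def shiftedShape (m : List ℕ) : Prop := m = [] ∨ m.length ≤ m.getLastD 0

/-- A shifted Young tableau of the shape with cell set `C`: the cells strictly below
the diagonal are marked (here: entry `0`), the cells weakly above it carry letters,
rows and columns weakly increase, an unprimed letter occurs at most once per column
(adjacent equal entries in a column must be primed), a primed letter occurs at most
once per row (adjacent equal entries in a row must be unprimed). -/
structure ShYT (C : Finset (ℕ × ℕ)) where
  entry : ℕ → ℕ → ℕ
  pos : ∀ i j, (i, j) ∈ upCells C → 0 < entry i j
  zeros : ∀ i j, (i, j) ∉ upCells C → entry i j = 0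
  row_weak : ∀ i j, (i, j) ∈ upCells C → (i, j + 1) ∈ upCells C →
    entry i j ≤ entry i (j + 1) ∧ (entry i j = entry i (j + 1) → entry i j % 2 = 0)
  col_weak : ∀ i j, (i, j) ∈ upCells C → (i + 1, j) ∈ upCells C →
    entry i j ≤ entry (i + 1) j ∧ (entry i j = entry (i + 1) j → entry i j % 2 = 1)

/-- The multiset of (encoded) letters of a shifted Young tableau. -/
def ShYT.ms {C : Finset (ℕ × ℕ)} (T : ShYT C) : Multiset ℕ :=
  (upCells C).val.map fun c => T.entry c.1 c.2

/-- The weight of a multiset of encoded letters: `i'` and `i` both count towards `x_i`. -/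
noncomputable def shWt (m : Multiset ℕ) : ℕ →₀ ℕ := (m.map varOf).toFinsupp

/-- The Q-Schur function of the shape with cell set `C`. -/
noncomputable def qGF (C : Finset (ℕ × ℕ)) : MvPowerSeries ℕ ℤ :=
  fun m => (Nat.card {T : ShYT C // shWt T.ms = m} : ℤ)

/-- A shifted set-valued Young tableau of the shape with cell set `C`. -/
structure ShSetYT (C : Finset (ℕ × ℕ)) where
  entry : ℕ → ℕ → Finset ℕ
  nonemp : ∀ i j, (i, j) ∈ upCells C → (entry i j).Nonempty
  pos : ∀ i j, ∀ a ∈ entry i j, 0 < a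
  empt : ∀ i j, (i, j) ∉ upCells C → entry i j = ∅
  row_weak : ∀ i j, (i, j) ∈ upCells C → (i, j + 1) ∈ upCells C →
    ∀ a ∈ entry i j, ∀ b ∈ entry i (j + 1), a ≤ b ∧ (a = b → a % 2 = 0)
  col_weak : ∀ i j, (i, j) ∈ upCells C → (i + 1, j) ∈ upCells C →
    ∀ a ∈ entry i j, ∀ b ∈ entry (i + 1) j, a ≤ b ∧ (a = b → a % 2 = 1)

/-- The multiset of all (encoded) letters of a shifted set-valued Young tableau. -/
def ShSetYT.ms {C : Finset (ℕ × ℕ)} (T : ShSetYT C) : Multiset ℕ :=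
  (upCells C).val.bind fun c => (T.entry c.1 c.2).val

/-- The K-theoretic Q-Schur function of the shape with cell set `C`. -/
noncomputable def gqGF (C : Finset (ℕ × ℕ)) : MvPowerSeries ℕ ℤ :=
  fun m => (-1) ^ ((m.sum fun _ n => n) - (upCells C).card) *
    (Nat.card {T : ShSetYT C // shWt T.ms = m} : ℤ)
/-- `d'` contains a cell directly left of (and adjacent to) a cell of `d`. -/
def leftAdjacent (d' d : Domino) : Prop :=
  ∃ i j, (i, j) ∈ dcells d' ∧ (i, j + 1) ∈ dcells d

/-- A shifted paving of the partition `l`: the 2-quotient components are shifted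
shapes, and no vertical domino on `D₀` has all of its left-adjacent dominoes
strictly below `D₀`. -/
def IsShiftedPaving (l : List ℕ) (P : Paving (cellsOf l)) : Prop :=
  shiftedShape (twoQuotient l).1 ∧ shiftedShape (twoQuotient l).2 ∧
  ¬ ∃ d ∈ P.dominoes, d.2 = false ∧ ddiag d = 0 ∧
      (∃ d' ∈ P.dominoes, leftAdjacent d' d) ∧
      ∀ d' ∈ P.dominoes, leftAdjacent d' d → ddiag d' < 0

/-- A shifted pavable partition: one admitting a shifted paving. -/
def IsShiftedPavable (l : List ℕ) : Prop :=
  ∃ P : Paving (cellsOf l), IsShiftedPaving l P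

/-- A shifted domino tableau of shape `l`: dominoes strictly below `D₀` are marked
(entry `0`); dominoes weakly above `D₀` carry letters, rows and columns weakly
increase, at most one `i` per column, at most one `i'` per row. -/
structure SDT (l : List ℕ) extends Paving (cellsOf l) where
  shifted : IsShiftedPaving l toPaving
  entry : Domino → ℕ
  pos : ∀ d ∈ dominoes, 0 ≤ ddiag d → 0 < entry d
  zeros : ∀ d, d ∉ dominoes ∨ ddiag d < 0 → entry d = 0
  row_weak : ∀ d₁ ∈ dominoes, ∀ d₂ ∈ dominoes,
    0 ≤ ddiag d₁ → 0 ≤ ddiag d₂ → d₁ ≠ d₂ → ∀ i j,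
    (i, j) ∈ dcells d₁ → (i, j + 1) ∈ dcells d₂ →
    entry d₁ ≤ entry d₂ ∧ (entry d₁ = entry d₂ → entry d₁ % 2 = 0)
  col_weak : ∀ d₁ ∈ dominoes, ∀ d₂ ∈ dominoes,
    0 ≤ ddiag d₁ → 0 ≤ ddiag d₂ → d₁ ≠ d₂ → ∀ i j,
    (i, j) ∈ dcells d₁ → (i + 1, j) ∈ dcells d₂ →
    entry d₁ ≤ entry d₂ ∧ (entry d₁ = entry d₂ → entry d₁ % 2 = 1)

/-- The part of a shifted domino tableau weakly northeast of `D₀`. -/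
def SDT.upPart {l : List ℕ} (T : SDT l) : Finset Domino × (Domino → ℕ) :=
  (T.dominoes.filter fun d => 0 ≤ ddiag d, T.entry)

/-- Two shifted domino tableaux are equivalent when they agree weakly northeast of `D₀`. -/
def sdtSetoid (l : List ℕ) : Setoid (SDT l) :=
  ⟨fun T T' => T.upPart = T'.upPart, ⟨fun _ => rfl, Eq.symm, Eq.trans⟩⟩

/-- Shifted domino tableaux of shape `l`, up to equivalence. -/
def SDTclass (l : List ℕ) := Quotient (sdtSetoid l)

/-- The multiset of (encoded) letters of a shifted domino tableau class. -/
def SDTclass.ms {l : List ℕ} : SDTclass l → Multiset ℕ :=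
  Quotient.lift (fun T : SDT l => T.upPart.1.val.map T.upPart.2)
    fun a b h => congrArg (fun p : Finset Domino × (Domino → ℕ) => p.1.val.map p.2) (h : a.upPart = b.upPart)

/-- The generating function of shifted domino tableaux of shape `l` (up to equivalence). -/
noncomputable def sdtGF (l : List ℕ) : MvPowerSeries ℕ ℤ :=
  fun m => (Nat.card {T : SDTclass l // shWt (SDTclass.ms T) = m} : ℤ)
/-- A shifted set-valued domino tableau of shape `l`: dominoes strictly below `D₀`
are marked (entry `∅`); dominoes weakly above `D₀` carry finite nonempty sets of
letters; the minima form a shifted domino tableau; and same-type dominoes on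
neighboring even diagonals satisfy the max/min conditions, with strictness governed
by whether the maximum is primed (odd code) or unprimed (even code). -/
structure SSVDT (l : List ℕ) extends Paving (cellsOf l) where
  shifted : IsShiftedPaving l toPaving
  entry : Domino → Finset ℕ
  nonemp : ∀ d, d ∈ dominoes → 0 ≤ ddiag d → (entry d).Nonempty
  pos : ∀ d, ∀ a ∈ entry d, 0 < a
  empt : ∀ d, d ∉ dominoes ∨ ddiag d < 0 → entry d = ∅
  min_row : ∀ d₁ (h₁ : d₁ ∈ dominoes), ∀ d₂ (h₂ : d₂ ∈ dominoes),
    ∀ (g₁ : 0 ≤ ddiag d₁) (g₂ : 0 ≤ ddiag d₂), d₁ ≠ d₂ → ∀ i j,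
    (i, j) ∈ dcells d₁ → (i, j + 1) ∈ dcells d₂ →
    (entry d₁).min' (nonemp d₁ h₁ g₁) ≤ (entry d₂).min' (nonemp d₂ h₂ g₂) ∧
      ((entry d₁).min' (nonemp d₁ h₁ g₁) = (entry d₂).min' (nonemp d₂ h₂ g₂) →
        (entry d₁).min' (nonemp d₁ h₁ g₁) % 2 = 0)
  min_col : ∀ d₁ (h₁ : d₁ ∈ dominoes), ∀ d₂ (h₂ : d₂ ∈ dominoes),
    ∀ (g₁ : 0 ≤ ddiag d₁) (g₂ : 0 ≤ ddiag d₂), d₁ ≠ d₂ → ∀ i j,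
    (i, j) ∈ dcells d₁ → (i + 1, j) ∈ dcells d₂ →
    (entry d₁).min' (nonemp d₁ h₁ g₁) ≤ (entry d₂).min' (nonemp d₂ h₂ g₂) ∧
      ((entry d₁).min' (nonemp d₁ h₁ g₁) = (entry d₂).min' (nonemp d₂ h₂ g₂) →
        (entry d₁).min' (nonemp d₁ h₁ g₁) % 2 = 1)
  diag_a : ∀ d₁ (h₁ : d₁ ∈ dominoes), ∀ d₂ (h₂ : d₂ ∈ dominoes),
    ∀ (g₁ : 0 ≤ ddiag d₁) (g₂ : 0 ≤ ddiag d₂), dtype1 d₁ = dtype1 d₂ →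
    ddiag d₂ = ddiag d₁ + 2 → weaklySE d₁ d₂ →
    (∀ a ∈ entry d₁, ∀ b ∈ entry d₂, a ≤ b) ∧
      ((entry d₁).max' (nonemp d₁ h₁ g₁) % 2 = 1 →
        ∀ a ∈ entry d₁, ∀ b ∈ entry d₂, a < b)
  diag_b : ∀ d₁ (h₁ : d₁ ∈ dominoes), ∀ d₂ (h₂ : d₂ ∈ dominoes),
    ∀ (g₁ : 0 ≤ ddiag d₁) (g₂ : 0 ≤ ddiag d₂), dtype1 d₁ = dtype1 d₂ →
    ddiag d₁ = ddiag d₂ + 2 → weaklySE d₁ d₂ →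
    (∀ a ∈ entry d₁, ∀ b ∈ entry d₂, a ≤ b) ∧
      ((entry d₁).max' (nonemp d₁ h₁ g₁) % 2 = 0 →
        ∀ a ∈ entry d₁, ∀ b ∈ entry d₂, a < b)

/-- The part of a shifted set-valued domino tableau weakly northeast of `D₀`. -/
def SSVDT.upPart {l : List ℕ} (T : SSVDT l) : Finset Domino × (Domino → Finset ℕ) :=
  (T.dominoes.filter fun d => 0 ≤ ddiag d, T.entry)

/-- Equivalence: agreement weakly northeast of `D₀`. -/
def ssvdtSetoid (l : List ℕ) : Setoid (SSVDT l) :=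
  ⟨fun T T' => T.upPart = T'.upPart, ⟨fun _ => rfl, Eq.symm, Eq.trans⟩⟩

/-- Shifted set-valued domino tableaux of shape `l`, up to equivalence. -/
def SSVDTclass (l : List ℕ) := Quotient (ssvdtSetoid l)

/-- The multiset of all (encoded) letters of a class. -/
def SSVDTclass.ms {l : List ℕ} : SSVDTclass l → Multiset ℕ :=
  Quotient.lift (fun T : SSVDT l => T.upPart.1.val.bind fun d => (T.upPart.2 d).val)
    fun a b h =>
      congrArg (fun p : Finset Domino × (Domino → Finset ℕ) => p.1.val.bind fun d => (p.2 d).val)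
        (h : a.upPart = b.upPart)

/-- The number `|up(T)|` of dominoes weakly northeast of `D₀`, for a class. -/
def SSVDTclass.upCard {l : List ℕ} : SSVDTclass l → ℕ :=
  Quotient.lift (fun T : SSVDT l => T.upPart.1.card)
    fun a b h =>
      congrArg (fun p : Finset Domino × (Domino → Finset ℕ) => p.1.card)
        (h : a.upPart = b.upPart)

/-- The signed generating function of shifted set-valued domino tableaux of shape `l`:
each class `T` of weight `m` contributes `(-1) ^ (|up(T)| − (number of up dominoes))`,
where `|up(T)|`, the total number of letters of `T`, is the degree of `m`. -/
noncomputable def ssvdtGF (l : List ℕ) : MvPowerSeries ℕ ℤ :=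
  fun m => ∑ᶠ T : {T : SSVDTclass l // shWt (SSVDTclass.ms T) = m},
    (-1 : ℤ) ^ ((m.sum fun _ n => n) - SSVDTclass.upCard T.1)
/-- The diagonal reading word of a tableau along the diagonal of content `c`
(cells `(i, j)` with `j - i = c`), read from northwest to southeast. -/
def diagWord {C : Finset (ℕ × ℕ)} (T : SSYT C) (c : ℤ) : List ℕ :=
  (((C.filter fun p => (p.2 : ℤ) - p.1 = c).image Prod.fst).sort (· ≤ ·)).map
    fun i => T.entry i ((i : ℤ) + c).toNat

section PavingCardHelpers

theorem mapIdx_eq_range_map' (f : ℕ → ℕ → ℕ) (l : List ℕ) :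
    l.mapIdx f = (List.range l.length).map fun i => f i (l.getD i 0) := by
  induction l generalizing f with
  | nil => simp
  | cons a t ih =>
    rw [List.mapIdx_cons, List.length_cons, List.range_succ_eq_map]
    simp only [List.map_cons, List.getD_cons_zero, List.map_map]
    rw [ih]
    congr 1

theorem sum_list_range_map (f : ℕ → ℕ) (n : ℕ) :
    ((List.range n).map f).sum = ∑ i ∈ range n, f i := by
  induction n with
  | zero => simp
  | succ n ih => rw [List.range_succ, Finset.sum_range_succ, List.map_append]; simp [ih]

theorem length_filter_range_map (f : ℕ → ℕ) (p : ℕ → Bool) (n : ℕ) :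
    (((List.range n).map f).filter p).length = ((range n).filter fun i => p (f i)).card := by
  induction n with
  | zero => simp
  | succ n ih =>
    rw [List.range_succ, List.map_append, List.filter_append, Finset.range_add_one,
      Finset.filter_insert]
    by_cases h : p (f n) <;> simp [h, ih, Finset.card_insert_of_notMem]

theorem sum_filter_ne_zero' (L : List ℕ) : (L.filter fun x => x != 0).sum = L.sum := by
  induction L with
  | nil => simp
  | cons a t ih =>
    by_cases h : a = 0 <;> simp [List.filter_cons, h, ih]

theorem sum_filter_split (l : List ℕ) (p : ℕ → Bool) :
    (l.filter p).sum + (l.filter (fun a => !p a)).sum = l.sum := by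
  induction l with
  | nil => simp
  | cons a t ih => by_cases h : p a <;> simp [List.filter_cons, h] <;> omega

theorem length_filter_split (l : List ℕ) (p : ℕ → Bool) :
    (l.filter p).length + (l.filter (fun a => !p a)).length = l.length := by
  induction l with
  | nil => simp
  | cons a t ih => by_cases h : p a <;> simp [List.filter_cons, h] <;> omega

theorem staircase_bound {r : ℕ} :
    ∀ (E : List ℕ), E.Pairwise (· > ·) → (∀ a ∈ E, a % 2 = r) →
    ∀ a ∈ E.head?, 2 * E.tail.length + r ≤ a := by
  intro E
  induction E with
  | nil => simp
  | cons a t ih =>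
    intro hp hpar b hb
    simp only [List.head?_cons, Option.mem_some_iff] at hb
    subst hb
    cases t with
    | nil =>
      have := hpar a (by simp)
      have := Nat.mod_le a 2
      simp only [List.tail_cons, List.length_nil]
      omega
    | cons c s =>
      have hp' := hp.tail
      have h1 : 2 * s.length + r ≤ c := by
        have := ih hp' (fun x hx => hpar x (List.mem_cons_of_mem _ hx)) c (by simp)
        simpa using this
      have hac : c < a := (List.pairwise_cons.mp hp).1 c (by simp)
      have : a % 2 = c % 2 := by
        rw [hpar a (by simp), hpar c (by simp [List.mem_cons]) ]
      simp only [List.tail_cons, List.length_cons]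
      omega

theorem qsum (r : ℕ) :
    ∀ (E : List ℕ), E.Pairwise (· > ·) → (∀ a ∈ E, a % 2 = r) →
    2 * (E.mapIdx fun i a => (a - (2 * (E.length - 1 - i) + r)) / 2).sum
      + E.length * (E.length - 1) + r * E.length = E.sum := by
  intro E
  induction E with
  | nil => simp
  | cons a t ih =>
    intro hp hpar
    rw [List.mapIdx_cons]
    have htail : (List.mapIdx (fun i x => (x - (2 * ((a :: t).length - 1 - (i + 1)) + r)) / 2) t)
        = (List.mapIdx (fun i x => (x - (2 * (t.length - 1 - i) + r)) / 2) t) := by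
      rw [mapIdx_eq_range_map', mapIdx_eq_range_map']
      apply List.map_congr_left
      intro i hi
      simp only [List.mem_range] at hi
      congr 2
      simp only [List.length_cons]
      omega
    rw [htail]
    simp only [List.sum_cons, List.length_cons]
    have hb : 2 * t.length + r ≤ a := by
      have := staircase_bound (E := a :: t) hp hpar a (by simp)
      simpa using this
    have hpar' : a % 2 = r := hpar a (by simp)
    have ihv := ih hp.tail (fun x hx => hpar x (List.mem_cons_of_mem _ hx))
    have hhead : 2 * ((a - (2 * ((a::t).length - 1 - 0) + r)) / 2) = a - 2 * t.length - r := by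
      simp only [List.length_cons]
      omega
    have hnl : (t.length + 1) * t.length = t.length * (t.length - 1) + 2 * t.length := by
      cases t.length with
      | zero => rfl
      | succ m => simp only [Nat.succ_sub_one, Nat.add_sub_cancel]; ring
    simp only [List.length_cons, Nat.add_sub_cancel, Nat.sub_zero] at hhead ⊢
    rw [hnl, Nat.mul_succ]
    omega

theorem quot_sum (L : List ℕ) (hpair : L.Pairwise (· > ·)) (r : ℕ) :
    2 * (quotPart L r).sum
      + (L.filter fun x => x % 2 == r).length * ((L.filter fun x => x % 2 == r).length - 1)
      + r * (L.filter fun x => x % 2 == r).length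
      = (L.filter fun x => x % 2 == r).sum := by
  have h1 : (quotPart L r).sum
      = ((L.filter fun x => x % 2 == r).mapIdx fun i a =>
          (a - (2 * ((L.filter fun x => x % 2 == r).length - 1 - i) + r)) / 2).sum := by
    simp only [quotPart]
    exact sum_filter_ne_zero' _
  rw [h1]
  exact qsum r _ (hpair.sublist (List.filter_sublist))
    (fun a ha => by simpa using (List.mem_filter.mp ha).2)

theorem card_range_parity (c n : ℕ) :
    ((range n).filter fun j => (c + j) % 2 = 0).card = (n + 1 - c % 2) / 2 := by
  induction n with
  | zero => simp; omega
  | succ n ih =>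
    rw [Finset.range_add_one, Finset.filter_insert]
    by_cases h : (c + n) % 2 = 0
    · rw [if_pos h, Finset.card_insert_of_notMem (by simp)]
      omega
    · rw [if_neg h]
      omega

theorem filter_cellsOf_card (l : List ℕ) (p : ℕ × ℕ → Prop) [DecidablePred p] :
    ((cellsOf l).filter p).card
      = ∑ i ∈ range l.length, ((range (l.getD i 0)).filter fun j => p (i, j)).card := by
  rw [cellsOf, Finset.filter_biUnion, Finset.card_biUnion]
  · apply Finset.sum_congr rfl
    intro i _
    rw [Finset.filter_image]
    rw [Finset.card_image_of_injective]
    intro a b hab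
    simpa using hab
  · intro x _ y _ hxy
    simp only [Finset.disjoint_left, Finset.mem_filter, Finset.mem_image, Finset.mem_range]
    rintro ⟨a, b⟩ ⟨⟨j, _, hj⟩, _⟩ ⟨⟨j', _, hj'⟩, _⟩
    obtain ⟨rfl, rfl⟩ := Prod.mk.injEq .. ▸ hj
    exact hxy (Prod.mk.injEq .. ▸ hj').1.symm

theorem dcells_filter_card (d : Domino) (r : ℕ) (hr : r < 2) :
    ((dcells d).filter fun c => (c.1 + c.2) % 2 = r).card = 1 := by
  obtain ⟨⟨i, j⟩, b⟩ := d
  cases b <;>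
    · simp only [dcells, Finset.filter_insert, Finset.filter_singleton]
      by_cases h : (i + j) % 2 = r
      · rw [if_pos h, if_neg (by omega)]
        simp
      · rw [if_neg h, if_pos (by omega)]
        simp

theorem paving_filter_card {C : Finset (ℕ × ℕ)} (P : Paving C) (r : ℕ) (hr : r < 2) :
    (C.filter fun c => (c.1 + c.2) % 2 = r).card = P.dominoes.card := by
  have hcov : C.filter (fun c => (c.1 + c.2) % 2 = r)
      = (P.dominoes.biUnion dcells).filter (fun c => (c.1 + c.2) % 2 = r) := by
    rw [P.cover]
  rw [hcov, Finset.filter_biUnion, Finset.card_biUnion]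
  · rw [Finset.sum_congr rfl fun d _ => dcells_filter_card d r hr]
    simp
  · intro x hx y hy hxy
    exact (P.disj hx hy hxy).mono (Finset.filter_subset _ _) (Finset.filter_subset _ _)

theorem balance (k : ℕ) (lam : ℕ → ℕ)
    (H : ∑ i ∈ range k, 2 * ((range (lam i)).filter fun j => (i + j) % 2 = 0).card
        = ∑ i ∈ range k, lam i) :
    ((range k).filter fun i => (lam i + (k - 1 - i)) % 2 = 0).card
        = ((range k).filter fun i => (lam i + (k - 1 - i)) % 2 = 1).card
      ∨ ((range k).filter fun i => (lam i + (k - 1 - i)) % 2 = 0).card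
        = ((range k).filter fun i => (lam i + (k - 1 - i)) % 2 = 1).card + 1 := by
  have helper : ∀ a b : ℕ, (if (a + b) % 2 = 0 then (1:ℤ) else -1)
      = (-1) ^ b * (1 - 2 * ((a % 2 : ℕ) : ℤ)) := by
    intro a b
    rcases Nat.even_or_odd b with hb | hb
    · have h2 := Nat.even_iff.mp hb
      rw [hb.neg_one_pow, one_mul]
      by_cases h : a % 2 = 0
      · rw [if_pos (by omega), h]; norm_num
      · rw [if_neg (by omega), (by omega : a % 2 = 1)]; norm_num
    · have h2 := Nat.odd_iff.mp hb
      rw [hb.neg_one_pow]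
      by_cases h : a % 2 = 0
      · rw [if_neg (by omega), h]; norm_num
      · rw [if_pos (by omega), (by omega : a % 2 = 1)]; norm_num
  set t : ℕ → ℤ := fun i => (-1) ^ i * ((lam i % 2 : ℕ) : ℤ) with ht
  have hterm : ∀ i, (2 * (((range (lam i)).filter fun j => (i + j) % 2 = 0).card : ℤ))
      - lam i = t i := by
    intro i
    rcases Nat.even_or_odd i with hi | hi
    · have F : 2 * (((range (lam i)).filter fun j => (i + j) % 2 = 0).card) = lam i + lam i % 2 := by
        rw [card_range_parity]
        have := Nat.even_iff.mp hi
        omega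
      simp only [ht, hi.neg_one_pow, one_mul]
      omega
    · have F : 2 * (((range (lam i)).filter fun j => (i + j) % 2 = 0).card) = lam i - lam i % 2 := by
        rw [card_range_parity]
        have := Nat.odd_iff.mp hi
        omega
      simp only [ht, hi.neg_one_pow, neg_one_mul]
      omega
  have hA : ∑ i ∈ range k, t i = 0 := by
    have hc := congrArg (Nat.cast : ℕ → ℤ) H
    push_cast at hc
    calc ∑ i ∈ range k, t i
        = ∑ i ∈ range k, ((2 * (((range (lam i)).filter fun j => (i + j) % 2 = 0).card : ℤ))
            - lam i) := Finset.sum_congr rfl fun i _ => (hterm i).symm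
      _ = 0 := by rw [Finset.sum_sub_distrib, sub_eq_zero, ← hc]
  have hsplit : ((((range k).filter fun i => (lam i + (k - 1 - i)) % 2 = 0).card : ℤ)
        - (((range k).filter fun i => (lam i + (k - 1 - i)) % 2 = 1).card : ℤ))
      = ∑ i ∈ range k, (if (lam i + (k - 1 - i)) % 2 = 0 then (1:ℤ) else -1) := by
    rw [Finset.card_filter, Finset.card_filter]
    push_cast
    rw [← Finset.sum_sub_distrib]
    apply Finset.sum_congr rfl
    intro i _
    by_cases h : (lam i + (k - 1 - i)) % 2 = 0
    · rw [if_pos h, if_pos h, if_neg (by omega)]; norm_num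
    · rw [if_neg h, if_neg h, if_pos (by omega)]; norm_num
  have hstep : ∀ i ∈ range k, (if (lam i + (k - 1 - i)) % 2 = 0 then (1:ℤ) else -1)
      = (-1) ^ (k - 1) * ((-1) ^ i - 2 * t i) := by
    intro i hi
    rw [Finset.mem_range] at hi
    have hu : (k - 1 - i) + i = k - 1 := by omega
    have hpow : ((-1 : ℤ)) ^ (k - 1) = (-1) ^ (k - 1 - i) * (-1) ^ i := by
      rw [← pow_add, hu]
    rw [helper (lam i) (k - 1 - i), hpow, ht]
    rcases Nat.even_or_odd i with hi2 | hi2 <;> simp only [hi2.neg_one_pow, Odd.neg_one_pow] <;> ring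
  have hB : ((((range k).filter fun i => (lam i + (k - 1 - i)) % 2 = 0).card : ℤ)
        - (((range k).filter fun i => (lam i + (k - 1 - i)) % 2 = 1).card : ℤ))
      = (-1) ^ (k - 1) * (if Even k then 0 else 1) := by
    rw [hsplit, Finset.sum_congr rfl hstep, ← Finset.mul_sum, Finset.sum_sub_distrib,
      ← Finset.mul_sum, hA, neg_one_geom_sum]
    ring
  rcases Nat.even_or_odd k with hk | hk
  · left
    rw [if_pos hk, mul_zero] at hB
    omega
  · right
    have h1 : (-1 : ℤ) ^ (k - 1) = 1 :=
      Even.neg_one_pow (by have := Nat.odd_iff.mp hk; exact Nat.even_iff.mpr (by omega))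
    rw [if_neg (Nat.not_even_iff_odd.mpr hk), h1, one_mul] at hB
    omega

theorem eo_arith (e o k : ℕ) (h1 : e + o = k) (h2 : e = o ∨ e = o + 1) :
    e * (e - 1) + o * (o - 1) + o = ∑ i ∈ range k, (k - 1 - i) := by
  have hr : ∑ i ∈ range k, (k - 1 - i) = ∑ i ∈ range k, i :=
    Finset.sum_range_reflect (fun i => i) k
  have hg : (∑ i ∈ range k, i) * 2 = k * (k - 1) := Finset.sum_range_id_mul_two k
  have key : 2 * (e * (e - 1) + o * (o - 1) + o) = k * (k - 1) := by
    subst h1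
    have quad : ∀ n : ℕ, 2 * (n * (n - 1) + n * (n - 1) + n) = (n + n) * (n + n - 1) ∧
        2 * ((n + 1) * n + n * (n - 1) + n) = (n + 1 + n) * (n + 1 + n - 1) := by
      intro n
      cases n with
      | zero => exact ⟨rfl, rfl⟩
      | succ n =>
        have h1 : (n + 1) - 1 = n := rfl
        have h2 : (n + 1 + (n + 1)) - 1 = 2 * n + 1 := by omega
        have h4 : (n + 1 + 1 + (n + 1)) - 1 = 2 * n + 2 := by omega
        rw [h1, h2, h4]
        constructor <;> ring
    rcases h2 with rfl | rfl
    · exact (quad e).1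
    · simpa using (quad o).2
  rw [hr]
  omega

end PavingCardHelpers

/-- For a pavable partition `λ` with 2-quotient `(μ, ν)`, the number of dominoes in
any domino paving equals `|μ| + |ν| = |λ| / 2`. -/

theorem paving_card (l μ ν : List ℕ) (hl : IsPartition l)
    (hq : twoQuotient l = (μ, ν)) (P : Paving (cellsOf l)) :
    P.dominoes.card = μ.sum + ν.sum ∧ 2 * (μ.sum + ν.sum) = (cellsOf l).card := by
  classical
  -- Extract the 2-quotient components
  have hμ : μ = quotPart (betaList l) 0 := by
    rw [twoQuotient] at hq
    exact (Prod.ext_iff.mp hq).1.symm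
  have hν : ν = quotPart (betaList l) 1 := by
    rw [twoQuotient] at hq
    exact (Prod.ext_iff.mp hq).2.symm
  -- The beta list as a map over a range
  have hβ : betaList l = (List.range l.length).map fun i => l.getD i 0 + (l.length - 1 - i) := by
    rw [betaList, mapIdx_eq_range_map']
  -- Strictly decreasing
  have hpair : (betaList l).Pairwise (· > ·) := by
    rw [hβ, List.pairwise_iff_getElem]
    intro i j hi hj hij
    simp only [List.length_map, List.length_range] at hi hj
    simp only [List.getElem_map, List.getElem_range]
    have hle : l[j] ≤ l[i] := by
      have := List.pairwise_iff_getElem.mp hl.1 i j (by omega) (by omega) hij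
      exact this
    rw [List.getD_eq_getElem l 0 (by omega), List.getD_eq_getElem l 0 (by omega)]
    omega
  -- Sum identities on the quotient
  have hq0 := quot_sum (betaList l) hpair 0
  have hq1 := quot_sum (betaList l) hpair 1
  -- lengths and sums of the two parity classes, as Finset counts
  have hcnt : ∀ r : ℕ, ((betaList l).filter fun x => x % 2 == r).length
      = ((range l.length).filter fun i => (l.getD i 0 + (l.length - 1 - i)) % 2 = r).card := by
    intro r
    rw [hβ, length_filter_range_map]
    exact congrArg Finset.card (Finset.filter_congr fun i _ => by simp)
  -- Split of length and sum over the two parities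
  have hnot : ∀ x : ℕ, (x % 2 == 1) = !(x % 2 == 0) := by
    intro x
    have := Nat.mod_two_eq_zero_or_one x
    rcases this with h | h <;> simp [h]
  have hlen : ((betaList l).filter fun x => x % 2 == 0).length
      + ((betaList l).filter fun x => x % 2 == 1).length = l.length := by
    have := length_filter_split (betaList l) (fun x => x % 2 == 0)
    rw [List.filter_congr (fun x _ => hnot x)]
    rw [this, hβ, List.length_map, List.length_range]
  have hsum : ((betaList l).filter fun x => x % 2 == 0).sum
      + ((betaList l).filter fun x => x % 2 == 1).sum = (betaList l).sum := by
    rw [List.filter_congr (fun x _ => hnot x)]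
    exact sum_filter_split (betaList l) (fun x => x % 2 == 0)
  have hbsum : (betaList l).sum
      = (∑ i ∈ range l.length, l.getD i 0) + ∑ i ∈ range l.length, (l.length - 1 - i) := by
    rw [hβ, sum_list_range_map, Finset.sum_add_distrib]
  -- Cells side
  have hcells : (cellsOf l).card = ∑ i ∈ range l.length, l.getD i 0 := by
    have h := filter_cellsOf_card l (fun _ => True)
    simpa using h
  have hAc : ((cellsOf l).filter fun c => (c.1 + c.2) % 2 = 0).card
      = ∑ i ∈ range l.length, ((range (l.getD i 0)).filter fun j => (i + j) % 2 = 0).card :=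
    filter_cellsOf_card l _
  have hA0 := paving_filter_card P 0 (by omega)
  have hA1 := paving_filter_card P 1 (by omega)
  have hABc : ((cellsOf l).filter fun c => (c.1 + c.2) % 2 = 0).card
      + ((cellsOf l).filter fun c => (c.1 + c.2) % 2 = 1).card = (cellsOf l).card := by
    rw [show ((cellsOf l).filter fun c => (c.1 + c.2) % 2 = 1)
        = (cellsOf l).filter fun c => ¬((c.1 + c.2) % 2 = 0) from
      Finset.filter_congr fun c _ => by omega]
    exact Finset.card_filter_add_card_filter_not _
  have hC2 : (cellsOf l).card = 2 * P.dominoes.card := by omega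
  -- Balance hypothesis
  have Hbal : ∑ i ∈ range l.length,
      2 * ((range (l.getD i 0)).filter fun j => (i + j) % 2 = 0).card
      = ∑ i ∈ range l.length, l.getD i 0 := by
    rw [← Finset.mul_sum, ← hAc, hA0, ← hcells, hC2]
  have heo := balance l.length (fun i => l.getD i 0) Hbal
  -- Assemble
  have he0 := hcnt 0
  have he1 := hcnt 1
  have harith := eo_arith
    (((betaList l).filter fun x => x % 2 == 0).length)
    (((betaList l).filter fun x => x % 2 == 1).length)
    l.length hlen (by rw [he0, he1]; exact heo)
  have hμs : μ.sum = (quotPart (betaList l) 0).sum := by rw [hμ]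
  have hνs : ν.sum = (quotPart (betaList l) 1).sum := by rw [hν]
  have hfinal : 2 * (μ.sum + ν.sum) = (cellsOf l).card := by
    rw [hcells, hμs, hνs]
    omega
  exact ⟨by omega, hfinal⟩
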